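/- Let k ≥ 2 be an integer, let X be a real 2×2 matrix, and let Y be a real symmetric positive semidefinite 2×2 matrix. Then the following are equivalent: (i) the complex Hermitian matrices Y + i(Ω₁ − XΩ₁Xᵀ) and Y + iXΩ₁Xᵀ + (1−2/k)·iΩ₁ are both positive semidefinite; (ii) √(det Y) ≥ 1 − 1/k + |det X − 1/k|. -/

import Mathlib

open Matrix Complex ComplexOrder

/-- The standard symplectic form on one mode. -/
noncomputable def Omega1 : Matrix (Fin 2) (Fin 2) ℝ := !![0, 1; -1, 0]

/-- Complexification of a real matrix. -/
noncomputable def cplx {m p : Type*} (M : Matrix m p ℝ) : Matrix m p ℂ :=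
  M.map (fun x => (x : ℂ))

/-!
Since `X Ω₁ Xᵀ = (det X) Ω₁`, both matrices have the form `Y + i c Ω₁`, with `c = 1 - det X` and
`c = det X + 1 - 2/k`. A `2 × 2` Hermitian matrix is positive semidefinite iff its trace and
determinant are nonnegative; here the trace is `tr Y ≥ 0` and the determinant is `det Y - c²`, so
each condition reads `c² ≤ det Y`. With `a = 1 - 1/k ≥ 0` and `e = det X - 1/k` the two values of
`c` are `a ∓ e`, and the pair of conditions `(a - e)² ≤ det Y`, `(a + e)² ≤ det Y` is
`(a + |e|)² ≤ det Y`.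
-/

theorem Matrix.IsHermitian.posSemidef_iff_trace_nonneg_and_det_nonneg {𝕜 : Type*} [RCLike 𝕜]
    {A : Matrix (Fin 2) (Fin 2) 𝕜} (hA : A.IsHermitian) :
    A.PosSemidef ↔ 0 ≤ A.trace ∧ 0 ≤ A.det := by
  rw [hA.posSemidef_iff_eigenvalues_nonneg, hA.trace_eq_sum_eigenvalues,
    hA.det_eq_prod_eigenvalues, Fin.sum_univ_two, Fin.prod_univ_two, ← RCLike.ofReal_add,
    ← RCLike.ofReal_mul, RCLike.ofReal_nonneg, RCLike.ofReal_nonneg, Pi.le_def, Fin.forall_fin_two,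
    Pi.zero_apply, Pi.zero_apply]
  constructor
  · rintro ⟨ha, hb⟩
    exact ⟨add_nonneg ha hb, mul_nonneg ha hb⟩
  · rintro ⟨hsum, hprod⟩
    constructor <;> nlinarith

theorem mul_omega1_mul_transpose (X : Matrix (Fin 2) (Fin 2) ℝ) :
    X * Omega1 * Xᵀ = X.det • Omega1 := by
  ext i j
  fin_cases i <;> fin_cases j <;>
    simp [Omega1, mul_apply, Fin.sum_univ_two, det_fin_two] <;> ring

theorem cplx_smul {m p : Type*} (r : ℝ) (M : Matrix m p ℝ) : cplx (r • M) = (r : ℂ) • cplx M := by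
  ext i j
  simp [cplx]

theorem posSemidef_cplx_add_smul_omega1_iff {Y : Matrix (Fin 2) (Fin 2) ℝ} (hY : Y.PosSemidef)
    (c : ℝ) : (cplx Y + (c * I) • cplx Omega1).PosSemidef ↔ c ^ 2 ≤ Y.det := by
  have hsymm : Y 1 0 = Y 0 1 := by simpa using congrFun (congrFun hY.isHermitian 0) 1
  have hherm : (cplx Y + (c * I) • cplx Omega1).IsHermitian := by
    ext i j
    fin_cases i <;> fin_cases j <;> simp [cplx, Omega1, hsymm]
  have htrace : (cplx Y + (c * I) • cplx Omega1).trace = (Y.trace : ℂ) := by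
    simp [trace_fin_two, cplx, Omega1]
  have hdet : (cplx Y + (c * I) • cplx Omega1).det = ((Y.det - c ^ 2 : ℝ) : ℂ) := by
    simp [det_fin_two, cplx, Omega1, hsymm]
    linear_combination (c : ℂ) ^ 2 * I_sq
  rw [hherm.posSemidef_iff_trace_nonneg_and_det_nonneg, htrace, hdet, Complex.zero_le_real,
    Complex.zero_le_real, sub_nonneg]
  exact and_iff_right hY.trace_nonneg

theorem sq_sub_le_and_sq_add_le_iff_add_abs_le_sqrt {a e D : ℝ} (ha : 0 ≤ a) (hD : 0 ≤ D) :
    (a - e) ^ 2 ≤ D ∧ (a + e) ^ 2 ≤ D ↔ a + |e| ≤ √D := by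
  rw [Real.le_sqrt (by positivity) hD]
  rcases abs_cases e with ⟨he, he0⟩ | ⟨he, he0⟩ <;> rw [he]
  · exact ⟨And.right, fun h ↦ ⟨by nlinarith, h⟩⟩
  · exact ⟨And.left, fun h ↦ ⟨by simpa [← sub_eq_add_neg] using h, by nlinarith⟩⟩

theorem single_mode_channel_k_ext_iff_general
    (k : ℕ)
    (X Y : Matrix (Fin 2) (Fin 2) ℝ) (hY : Y.PosSemidef) :
    ((cplx Y + Complex.I • cplx (Omega1 - X * Omega1 * Xᵀ)).PosSemidef ∧
      (cplx Y + Complex.I • cplx (X * Omega1 * Xᵀ)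
        + ((1 - 2/(k:ℂ)) * Complex.I) • cplx Omega1).PosSemidef)
    ↔
    Real.sqrt Y.det ≥ 1 - 1/(k:ℝ) + |X.det - 1/(k:ℝ)| := by
  have hcp : cplx Y + I • cplx (Omega1 - X * Omega1 * Xᵀ)
      = cplx Y + (((1 - 1/(k:ℝ)) - (X.det - 1/(k:ℝ)) : ℝ) * I) • cplx Omega1 := by
    rw [mul_omega1_mul_transpose, show Omega1 - X.det • Omega1 = (1 - X.det) • Omega1 by module,
      cplx_smul, smul_smul]
    congr 2
    push_cast
    ring
  have hext : cplx Y + I • cplx (X * Omega1 * Xᵀ) + ((1 - 2/(k:ℂ)) * I) • cplx Omega1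
      = cplx Y + (((1 - 1/(k:ℝ)) + (X.det - 1/(k:ℝ)) : ℝ) * I) • cplx Omega1 := by
    rw [mul_omega1_mul_transpose, cplx_smul, smul_smul, add_assoc, ← add_smul]
    congr 2
    push_cast
    ring
  have ha : 0 ≤ 1 - 1/(k:ℝ) := sub_nonneg.2 (by simpa using Nat.cast_inv_le_one k)
  rw [hcp, hext, posSemidef_cplx_add_smul_omega1_iff hY, posSemidef_cplx_add_smul_omega1_iff hY,
    sq_sub_le_and_sq_add_le_iff_add_abs_le_sqrt ha hY.det_nonneg, ge_iff_le]

/-- A single-mode Gaussian channel `V ↦ XVXᵀ + Y` is completely positive and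
`k`-extendible if and only if `√(det Y) ≥ 1 − 1/k + |det X − 1/k|`. -/
theorem single_mode_channel_k_ext_iff
    (k : ℕ) (hk : 2 ≤ k)
    (X Y : Matrix (Fin 2) (Fin 2) ℝ) (hY : Y.PosSemidef) :
    ((cplx Y + Complex.I • cplx (Omega1 - X * Omega1 * Xᵀ)).PosSemidef ∧
      (cplx Y + Complex.I • cplx (X * Omega1 * Xᵀ)
        + ((1 - 2/(k:ℂ)) * Complex.I) • cplx Omega1).PosSemidef)
    ↔
    Real.sqrt Y.det ≥ 1 - 1/(k:ℝ) + |X.det - 1/(k:ℝ)| :=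
  single_mode_channel_k_ext_iff_general k X Y hY
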